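/- arXiv:2301.06426 — 7 statements merged into one kernel-verified Lean document; each statement's English description precedes it below -/
import Mathlib

section
/- Local lower bound on core-number: for every node v of a hypergraph H, the core-number c(v) satisfies c(v) ≥ max(|e_m(v)| − 1, min_{u∈V} |N(u)|), where e_m(v) is a hyperedge of maximum cardinality among the hyperedges containing v. -/
open Finset

variable {α : Type*} [DecidableEq α]

-- Neighbors of `v` within the strongly induced subhypergraph `H[S]`.
open Classical in
noncomputable def nbr (E : Finset (Finset α)) (S : Finset α) (v : α) : Finset α :=
  S.filter (fun u => u ≠ v ∧ ∃ e ∈ E, e ⊆ S ∧ v ∈ e ∧ u ∈ e)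

/-- `S` is `k`-cohesive: every node of `S` has at least `k` neighbors in `H[S]`. -/
def cohesive (E : Finset (Finset α)) (k : ℕ) (S : Finset α) : Prop :=
  ∀ v ∈ S, k ≤ (nbr E S v).card

/-- Neighborhood-based core-number: the largest `k` such that `v` lies in some
`k`-cohesive set (equivalently in the nbr-`k`-core, the greatest such set). -/
noncomputable def coreNum (E : Finset (Finset α)) (v : α) : ℕ :=
  sSup {k | ∃ S : Finset α, cohesive E k S ∧ v ∈ S}

lemma bdd_core (E : Finset (Finset α)) (v : α) :
    BddAbove {k | ∃ S : Finset α, cohesive E k S ∧ v ∈ S} := by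
  refine ⟨(E.sup id).card, ?_⟩
  rintro k ⟨S, hS, hvS⟩
  have h := hS v hvS
  refine h.trans (Finset.card_le_card ?_)
  intro u hu
  simp only [nbr, Finset.mem_filter] at hu
  obtain ⟨-, -, e, heE, -, -, hue⟩ := hu
  exact Finset.mem_sup.2 ⟨e, heE, hue⟩

/-- Local lower bound on the core-number:
`c(v) ≥ max (|e_m(v)| - 1) (min_{u ∈ V} |N(u)|)`. -/
theorem coreNum_lower_bound (E : Finset (Finset α)) (V : Finset α)
    (hE : ∀ e ∈ E, e ⊆ V) (v : α) (hv : v ∈ V)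
    (em : Finset α) (hem : em ∈ E) (hvem : v ∈ em)
    (hemMax : ∀ e ∈ E, v ∈ e → e.card ≤ em.card) :
    max (em.card - 1) (V.inf' ⟨v, hv⟩ (fun u => (nbr E V u).card)) ≤ coreNum E v := by
  apply max_le
  · apply le_csSup (bdd_core E v)
    refine ⟨em, ?_, hvem⟩
    intro u hu
    have : em.erase u ⊆ nbr E em u := by
      intro w hw
      simp only [nbr, Finset.mem_filter, Finset.mem_erase] at hw ⊢
      exact ⟨hw.2, hw.1, em, hem, subset_rfl, hu, hw.2⟩
    calc em.card - 1 = (em.erase u).card := (Finset.card_erase_of_mem hu).symm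
      _ ≤ _ := Finset.card_le_card this
  · apply le_csSup (bdd_core E v)
    refine ⟨V, ?_, hv⟩
    intro u hu
    exact Finset.inf'_le _ hu
end

section
/- For a node v contained in a hyperedge e, the set S = V_{|e|−1} ∪ e (the union of the (|e|−1)-core with the nodes of e) is (|e|−1)-cohesive: every node of S has at least |e|−1 neighbors in H[S]. -/
open Finset

variable {α : Type*} [DecidableEq α]

/-- For a hyperedge `e`, the union of the `(|e|-1)`-core with `e` is
`(|e|-1)`-cohesive. -/
theorem union_with_edge_cohesive (E : Finset (Finset α)) (e : Finset α) (he : e ∈ E)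
    (hcard : 1 ≤ e.card) (v : α) (hv : v ∈ e)
    (Vk : Finset α) (hVk : cohesive E (e.card - 1) Vk) :
    cohesive E (e.card - 1) (Vk ∪ e) := by
  intro u hu
  by_cases hue : u ∈ e
  · have hsub : e.erase u ⊆ nbr E (Vk ∪ e) u := by
      intro w hw
      rw [Finset.mem_erase] at hw
      simp only [nbr, Finset.mem_filter, Finset.mem_union]
      exact ⟨Or.inr hw.2, hw.1, e, he, Finset.subset_union_right, hue, hw.2⟩
    calc e.card - 1 = (e.erase u).card := (Finset.card_erase_of_mem hue).symm
      _ ≤ _ := Finset.card_le_card hsub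
  · have huV : u ∈ Vk := by
      rcases Finset.mem_union.mp hu with h | h
      · exact h
      · exact absurd h hue
    have hsub : nbr E Vk u ⊆ nbr E (Vk ∪ e) u := by
      intro w hw
      simp only [nbr, Finset.mem_filter] at hw ⊢
      obtain ⟨hwS, hwu, f, hf, hfS, huf, hwf⟩ := hw
      exact ⟨Finset.mem_union_left _ hwS, hwu, f, hf,
        hfS.trans Finset.subset_union_left, huf, hwf⟩
    exact (hVk u huV).trans (Finset.card_le_card hsub)
end

section
/- Lower bound preservation under LCC: let H'=(V',E') be a strongly induced subhypergraph of H and LB = min_{u∈V'} |N_{H'}(u)|. Then for every v ∈ V' and n ≥ 0, if LCCSAT(ĥ_v^{(n)}) holds then ĥ_v^{(n)} ≥ LB. -/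
open Finset

variable {α : Type*} [DecidableEq α]

/-- Hirsch `H`-operator: the maximum `y` such that at least `y` of the elements
of the multiset are each at least `y`. -/
noncomputable def hirsch (m : Multiset ℕ) : ℕ :=
  sSup {y : ℕ | y ≤ (m.filter (fun x => y ≤ x)).card}

/- `N⁺(v)` for threshold `k` w.r.t. the value assignment `f`: the nodes (other
than `v`) covered by hyperedges containing `v` all of whose nodes `u` satisfy
`f u ≥ k`.
-/
open Classical in
noncomputable def plusNbr (E : Finset (Finset α)) (f : α → ℕ) (v : α) (k : ℕ) : Finset α :=
  ((E.filter (fun e => v ∈ e ∧ ∀ u ∈ e, k ≤ f u)).biUnion id).erase v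

/-- Local coreness constraint `LCCSAT(k)` for node `v` w.r.t. values `f`. -/
def lccsat (E : Finset (Finset α)) (f : α → ℕ) (v : α) (k : ℕ) : Prop :=
  k ≤ (plusNbr E f v k).card

variable [Fintype α]

/-- The coupled Local-core recurrences `(h⁽ⁿ⁾, ĥ⁽ⁿ⁾)`. -/
noncomputable def localSeq (E : Finset (Finset α)) : ℕ → (α → ℕ) × (α → ℕ)
  | 0 => (fun v => (nbr E Finset.univ v).card, fun v => (nbr E Finset.univ v).card)
  | n + 1 =>
    let hh : α → ℕ := fun v =>
      min (hirsch ((nbr E Finset.univ v).val.map (localSeq E n).2)) ((localSeq E n).2 v)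
    (hh, fun v => sSup {k | k ≤ hh v ∧ lccsat E hh v k})

/-- `h_v^{(n)}`. -/
noncomputable def hSeq (E : Finset (Finset α)) (n : ℕ) (v : α) : ℕ := (localSeq E n).1 v

/-- `ĥ_v^{(n)}`, the corrected hypergraph h-index of order `n`. -/
noncomputable def hhatSeq (E : Finset (Finset α)) (n : ℕ) (v : α) : ℕ := (localSeq E n).2 v


lemma nbr_subset_nbr_univ [Fintype α] (E : Finset (Finset α)) (V' : Finset α) (v : α) :
    nbr E V' v ⊆ nbr E univ v := by
  intro u hu
  simp only [nbr, mem_filter] at hu ⊢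
  obtain ⟨hu1, hne, e, he, hsub, hve, hue⟩ := hu
  exact ⟨mem_univ u, hne, e, he, subset_univ e, hve, hue⟩

lemma key_lemma [Fintype α] (E : Finset (Finset α)) (V' : Finset α) (hV' : V'.Nonempty)
    (LB : ℕ) (hLB : LB = V'.inf' hV' (fun u => (nbr E V' u).card)) :
    ∀ n, ∀ v ∈ V', LB ≤ hhatSeq E n v := by
  have hLB' : ∀ v ∈ V', LB ≤ (nbr E V' v).card := fun v hv => hLB ▸ inf'_le _ hv
  intro n
  induction n with
  | zero =>
    intro v hv
    have h1 : LB ≤ (nbr E univ v).card :=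
      (hLB' v hv).trans (card_le_card (nbr_subset_nbr_univ E V' v))
    simpa [hhatSeq, localSeq] using h1
  | succ n ih =>
    classical
    set f := (localSeq E n).2 with hf
    -- card of good neighbors
    have hcard : ∀ v ∈ V',
        LB ≤ ((nbr E univ v).filter (fun u => LB ≤ f u)).card := by
      intro v hv
      refine (hLB' v hv).trans (card_le_card ?_)
      intro u hu
      refine mem_filter.2 ⟨nbr_subset_nbr_univ E V' v hu, ?_⟩
      have huV : u ∈ V' := mem_of_mem_filter u hu
      exact ih u huV
    have hhirsch : ∀ v ∈ V', LB ≤ hirsch ((nbr E univ v).val.map f) := by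
      intro v hv
      have hmem : LB ∈ {y : ℕ | y ≤ (((nbr E univ v).val.map f).filter (fun x => y ≤ x)).card} := by
        have heq : (((nbr E univ v).val.map f).filter (fun x => LB ≤ x)).card
            = ((nbr E univ v).filter (fun u => LB ≤ f u)).card := by
          rw [Multiset.filter_map, Multiset.card_map]
          rfl
        simpa [Set.mem_setOf_eq, heq] using hcard v hv
      have hbdd : BddAbove {y : ℕ | y ≤ (((nbr E univ v).val.map f).filter (fun x => y ≤ x)).card} := by
        refine ⟨Multiset.card ((nbr E univ v).val.map f), fun y hy => ?_⟩
        exact hy.trans (Multiset.card_le_card (Multiset.filter_le _ _))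
      exact le_csSup hbdd hmem
    have hstep : ∀ v ∈ V', LB ≤ hSeq E (n+1) v := by
      intro v hv
      have : LB ≤ min (hirsch ((nbr E univ v).val.map f)) (f v) :=
        le_min (hhirsch v hv) (ih v hv)
      simpa [hSeq, localSeq, hf] using this
    intro v hv
    have hlccLB : lccsat E (hSeq E (n+1)) v LB := by
      have hsub : nbr E V' v ⊆ plusNbr E (hSeq E (n+1)) v LB := by
        intro u hu
        simp only [nbr, mem_filter] at hu
        obtain ⟨huV, hne, e, he, hsub', hve, hue⟩ := hu
        simp only [plusNbr, mem_erase, mem_biUnion, mem_filter, id]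
        refine ⟨hne, e, ⟨he, hve, fun w hw => hstep w (hsub' hw)⟩, hue⟩
      exact (hLB' v hv).trans (card_le_card hsub)
    have hsetmem : LB ∈ {k | k ≤ hSeq E (n+1) v ∧ lccsat E (hSeq E (n+1)) v k} :=
      ⟨hstep v hv, hlccLB⟩
    have hbdd : BddAbove {k | k ≤ hSeq E (n+1) v ∧ lccsat E (hSeq E (n+1)) v k} :=
      ⟨hSeq E (n+1) v, fun k hk => hk.1⟩
    have hfin : LB ≤ sSup {k | k ≤ hSeq E (n+1) v ∧ lccsat E (hSeq E (n+1)) v k} :=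
      le_csSup hbdd hsetmem
    exact hfin

/-- Lower-bound preservation under the local coreness constraint. -/
theorem lb_preserved (E : Finset (Finset α)) (V' : Finset α) (hV' : V'.Nonempty)
    (LB : ℕ) (hLB : LB = V'.inf' hV' (fun u => (nbr E V' u).card))
    (v : α) (hv : v ∈ V') (n : ℕ)
    (hlcc : lccsat E (hSeq E n) v (hhatSeq E n v)) :
    LB ≤ hhatSeq E n v := by
  exact key_lemma E V' hV' LB hLB n v hv
end

section
/- Correctness of Local-core (upper direction): if at convergence every node v satisfies the local coreness constraint at its limit value ĥ_v^{(∞)}, then the set {u : ĥ_u^{(∞)} ≥ ĥ_v^{(∞)}} together with the hyperedges witnessing LCC forms a subhypergraph in which every node has at least ĥ_v^{(∞)} neighbors; hence c(v) ≥ ĥ_v^{(∞)}. -/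
open Finset

variable {α : Type*} [DecidableEq α]

variable [Fintype α]

/-- Correctness of Local-core (upper direction): if every node satisfies LCC at
its converged value, then the nodes with limit value `≥ ĥ_v^{(∞)}` form a
`ĥ_v^{(∞)}`-cohesive set, hence `c(v) ≥ ĥ_v^{(∞)}`. -/
theorem localcore_upper (E : Finset (Finset α)) (L : α → ℕ)
    (hconv : ∀ u : α, ∃ N : ℕ, ∀ n ≥ N, hSeq E n u = L u ∧ hhatSeq E n u = L u)
    (hlcc : ∀ u : α, lccsat E L u (L u)) (v : α) :
    cohesive E (L v) (Finset.univ.filter (fun u => L v ≤ L u)) ∧ L v ≤ coreNum E v := by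
  classical
  set S : Finset α := Finset.univ.filter (fun u => L v ≤ L u) with hS
  have hcoh : cohesive E (L v) S := by
    intro u hu
    have huS : L v ≤ L u := (Finset.mem_filter.mp hu).2
    have hsub : plusNbr E L u (L u) ⊆ nbr E S u := by
      intro w hw
      simp only [plusNbr, Finset.mem_erase, Finset.mem_biUnion, Finset.mem_filter, id] at hw
      obtain ⟨hwne, e, ⟨heE, hue, hall⟩, hwe⟩ := hw
      have heS : e ⊆ S := by
        intro x hx
        exact Finset.mem_filter.mpr ⟨Finset.mem_univ x, le_trans huS (hall x hx)⟩
      simp only [nbr, Finset.mem_filter]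
      exact ⟨heS hwe, hwne, e, heE, heS, hue, hwe⟩
    calc L v ≤ L u := huS
      _ ≤ (plusNbr E L u (L u)).card := hlcc u
      _ ≤ (nbr E S u).card := Finset.card_le_card hsub
  refine ⟨hcoh, ?_⟩
  have hbdd : BddAbove {k | ∃ S : Finset α, cohesive E k S ∧ v ∈ S} := by
    refine ⟨Fintype.card α, ?_⟩
    rintro k ⟨T, hT, hvT⟩
    calc k ≤ (nbr E T v).card := hT v hvT
      _ ≤ Fintype.card α := Finset.card_le_univ _
  exact le_csSup hbdd ⟨S, hcoh, Finset.mem_filter.mpr ⟨Finset.mem_univ v, le_refl _⟩⟩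
end

section
/- Correctness of Local-core (both directions): if the local coreness constraint is satisfied for all nodes at the terminal iteration, then the converged value equals the core-number: ĥ_v^{(∞)} = c(v) for every node v. -/
open Finset

variable {α : Type*} [DecidableEq α]

variable [Fintype α]

set_option linter.unusedSectionVars false in
lemma hSeq_succ (E : Finset (Finset α)) (n : ℕ) (v : α) :
    hSeq E (n+1) v =
      min (hirsch ((nbr E Finset.univ v).val.map (hhatSeq E n))) (hhatSeq E n v) := rfl

set_option linter.unusedSectionVars false in
lemma hhatSeq_succ (E : Finset (Finset α)) (n : ℕ) (v : α) :
    hhatSeq E (n+1) v =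
      sSup {k | k ≤ hSeq E (n+1) v ∧ lccsat E (hSeq E (n+1)) v k} := rfl

set_option linter.unusedSectionVars false in
lemma nbr_mono {E : Finset (Finset α)} {S T : Finset α} (hST : S ⊆ T) (v : α) :
    nbr E S v ⊆ nbr E T v := by
  intro u hu
  simp only [nbr, mem_filter] at hu ⊢
  obtain ⟨huS, hne, e, he, heS, hv, hue⟩ := hu
  exact ⟨hST huS, hne, e, he, heS.trans hST, hv, hue⟩

lemma core_le_seq (E : Finset (Finset α)) (k : ℕ) (S : Finset α)
    (hS : cohesive E k S) :
    ∀ n : ℕ, (∀ u ∈ S, k ≤ hSeq E n u) ∧ (∀ u ∈ S, k ≤ hhatSeq E n u) := by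
  intro n
  induction n with
  | zero =>
    have h0 : ∀ u ∈ S, k ≤ hSeq E 0 u := by
      intro u hu
      calc k ≤ (nbr E S u).card := hS u hu
        _ ≤ (nbr E Finset.univ u).card := card_le_card (nbr_mono (subset_univ S) u)
    exact ⟨h0, h0⟩
  | succ n ih =>
    have hh : ∀ u ∈ S, k ≤ hSeq E (n+1) u := by
      intro u hu
      rw [hSeq_succ]
      refine le_min ?_ (ih.2 u hu)
      apply le_csSup
      · exact ⟨(((nbr E Finset.univ u).val.map (hhatSeq E n))).card,
          fun y hy => hy.trans (Multiset.card_le_card (Multiset.filter_le _ _))⟩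
      · have h1 : (nbr E S u).val ≤ (nbr E Finset.univ u).val :=
          val_le_iff.mpr (nbr_mono (subset_univ S) u)
        calc k ≤ (nbr E S u).card := hS u hu
          _ = (((nbr E S u).val.map (hhatSeq E n)).filter (fun x => k ≤ x)).card := by
              have hfeq : ((nbr E S u).val.map (hhatSeq E n)).filter (fun x => k ≤ x)
                  = (nbr E S u).val.map (hhatSeq E n) := by
                apply Multiset.filter_eq_self.mpr
                intro x hx
                obtain ⟨w, hw, rfl⟩ := Multiset.mem_map.mp hx
                exact ih.2 w (mem_of_mem_filter w hw)
              rw [hfeq, Multiset.card_map]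
              rfl
          _ ≤ (((nbr E Finset.univ u).val.map (hhatSeq E n)).filter (fun x => k ≤ x)).card :=
              Multiset.card_le_card
                (Multiset.filter_le_filter _ (Multiset.map_le_map h1))
    refine ⟨hh, fun u hu => ?_⟩
    rw [hhatSeq_succ]
    apply le_csSup ⟨hSeq E (n+1) u, fun j hj => hj.1⟩
    refine ⟨hh u hu, ?_⟩
    unfold lccsat
    calc k ≤ (nbr E S u).card := hS u hu
      _ ≤ (plusNbr E (hSeq E (n+1)) u k).card := ?_
    apply card_le_card
    intro w hw
    simp only [nbr, mem_filter] at hw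
    obtain ⟨hwS, hne, e, he, heS, hue, hwe⟩ := hw
    simp only [plusNbr, mem_erase, mem_biUnion, mem_filter, id] at *
    exact ⟨hne, e, ⟨he, hue, fun x hx => hh x (heS hx)⟩, hwe⟩

/-- Correctness of Local-core: if LCC is satisfied for all nodes at the terminal
iteration, the converged value equals the core-number. -/
theorem localcore_correct (E : Finset (Finset α)) (L : α → ℕ) (N : ℕ)
    (hconv : ∀ u : α, ∀ n ≥ N, hSeq E n u = L u ∧ hhatSeq E n u = L u)
    (hlcc : ∀ u : α, lccsat E L u (L u)) (v : α) :
    L v = coreNum E v := by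
  apply le_antisymm
  · apply le_csSup
    · refine ⟨Fintype.card α, fun k hk => ?_⟩
      obtain ⟨S, hS, hvS⟩ := hk
      exact (hS v hvS).trans ((card_le_univ _).trans (le_of_eq card_univ))
    · refine ⟨Finset.univ.filter (fun u => L v ≤ L u), ?_, by simp⟩
      intro u hu
      have huL : L v ≤ L u := (mem_filter.mp hu).2
      refine huL.trans ((hlcc u).trans (card_le_card ?_))
      intro w hw
      simp only [plusNbr, mem_erase, mem_biUnion, mem_filter, id] at hw
      obtain ⟨hne, e, ⟨he, hue, hall⟩, hwe⟩ := hw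
      have heS : e ⊆ Finset.univ.filter (fun u => L v ≤ L u) := by
        intro x hx
        exact mem_filter.mpr ⟨mem_univ x, huL.trans (hall x hx)⟩
      simp only [nbr, mem_filter]
      exact ⟨⟨mem_univ w, huL.trans (hall w hwe)⟩, hne, e, he, heS, hue, hwe⟩
  · refine csSup_le ⟨0, {v}, fun u _ => Nat.zero_le _, mem_singleton_self v⟩ ?_
    intro k hk
    obtain ⟨S, hS, hvS⟩ := hk
    have h := (core_le_seq E k S hS N).2 v hvS
    rwa [(hconv v N le_rfl).2] at h
end

section
/- In a hypergraph where every hyperedge has cardinality at most d_card and every pair of nodes is jointly contained in at most d_pair hyperedges, removing a single node v from a node set S decreases the total neighborhood volume by at most (d_pair(d_card − 2) + 2)·|N_S(v)|: Σ_{u∈S\{v}} |N_{S\{v}}(u)| ≥ Σ_{u∈S} |N_S(u)| − (d_pair(d_card−2)+2)·|N_S(v)|. -/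
open Finset

variable {α : Type*} [DecidableEq α]

/-- Deletion inequality: removing one node `v` from `S` decreases the total
neighborhood volume by at most `(d_pair·(d_card − 2) + 2)·|N_S(v)|`. -/
theorem deletion_inequality (E : Finset (Finset α)) (dcard dpair : ℕ)
    (hcard : ∀ e ∈ E, e.card ≤ dcard)
    (hpair : ∀ u w : α, u ≠ w → (E.filter (fun e => u ∈ e ∧ w ∈ e)).card ≤ dpair)
    (S : Finset α) (v : α) (hv : v ∈ S) :
    ∑ u ∈ S, (nbr E S u).card ≤
      (∑ u ∈ S.erase v, (nbr E (S.erase v) u).card) +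
        (dpair * (dcard - 2) + 2) * (nbr E S v).card := by
  classical
  set S' := S.erase v with hS'
  -- S'-neighbors are S-neighbors
  have hsub : ∀ u : α, nbr E S' u ⊆ nbr E S u := by
    intro u w hw
    simp only [nbr, mem_filter] at hw ⊢
    obtain ⟨hwS', hne, e, he, heS', hue, hwe⟩ := hw
    exact ⟨mem_of_mem_erase hwS', hne, e, he,
      heS'.trans (erase_subset _ _), hue, hwe⟩
  -- loss set
  set L : α → Finset α := fun u => (nbr E S u) \ (nbr E S' u) with hL
  have hsplit : ∀ u : α, (nbr E S u).card = (nbr E S' u).card + (L u).card := by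
    intro u
    rw [hL, add_comm]
    exact (card_sdiff_add_card_eq_card (hsub u)).symm
  -- nodes not adjacent to v lose nothing
  have hLempty : ∀ u ∈ S', u ∉ nbr E S v → L u = ∅ := by
    intro u huS' hunb
    rw [eq_empty_iff_forall_notMem]
    intro w hw
    rw [hL] at hw
    simp only [mem_sdiff, nbr, mem_filter, not_and, not_exists] at hw
    obtain ⟨⟨hwS, hwu, e, he, heS, hue, hwe⟩, hw2⟩ := hw
    have huv : u ≠ v := ne_of_mem_erase huS'
    have hunb' : ∀ e ∈ E, ¬(e ⊆ S ∧ v ∈ e ∧ u ∈ e) := by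
      intro e' he' ⟨h1, h2, h3⟩
      exact hunb (by simp only [nbr, mem_filter]
                     exact ⟨mem_of_mem_erase huS', huv, e', he', h1, h2, h3⟩)
    have hve : v ∉ e := fun hve => hunb' e he ⟨heS, hve, hue⟩
    have hwv : w ≠ v := by rintro rfl; exact hunb' e he ⟨heS, hwe, hue⟩
    have heS' : e ⊆ S' := fun x hx =>
      mem_erase.mpr ⟨fun h => hve (h ▸ hx), heS hx⟩
    exact (hw2 (mem_erase.mpr ⟨hwv, hwS⟩) hwu) e he heS' hue hwe
  -- loss is bounded for each u ∈ S'
  have hLsub : ∀ u ∈ S', L u ⊆ insert v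
      ((E.filter (fun e => e ⊆ S ∧ v ∈ e ∧ u ∈ e)).biUnion
        (fun e => (e.erase u).erase v)) := by
    intro u huS' w hw
    rw [hL] at hw
    simp only [mem_sdiff, nbr, mem_filter, not_and, not_exists] at hw
    obtain ⟨⟨hwS, hwu, e, he, heS, hue, hwe⟩, hw2⟩ := hw
    by_cases hwv : w = v
    · exact mem_insert.mpr (Or.inl hwv)
    · refine mem_insert.mpr (Or.inr ?_)
      have hwS' : w ∈ S' := mem_erase.mpr ⟨hwv, hwS⟩
      -- the witness edge must contain v
      have hve : v ∈ e := by
        by_contra hve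
        have heS' : e ⊆ S' := fun x hx =>
          mem_erase.mpr ⟨fun h => hve (h ▸ hx), heS hx⟩
        exact (hw2 hwS' hwu) e he heS' hue hwe
      refine mem_biUnion.mpr ⟨e, mem_filter.mpr ⟨he, heS, hve, hue⟩, ?_⟩
      exact mem_erase.mpr ⟨hwv, mem_erase.mpr ⟨hwu, hwe⟩⟩
  have hLcard : ∀ u ∈ S', (L u).card ≤ dpair * (dcard - 2) + 1 := by
    intro u huS'
    have huv : u ≠ v := ne_of_mem_erase huS'
    calc (L u).card ≤ (insert v
        ((E.filter (fun e => e ⊆ S ∧ v ∈ e ∧ u ∈ e)).biUnion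
          (fun e => (e.erase u).erase v))).card := card_le_card (hLsub u huS')
      _ ≤ ((E.filter (fun e => e ⊆ S ∧ v ∈ e ∧ u ∈ e)).biUnion
          (fun e => (e.erase u).erase v)).card + 1 := card_insert_le _ _
      _ ≤ (∑ e ∈ E.filter (fun e => e ⊆ S ∧ v ∈ e ∧ u ∈ e),
            ((e.erase u).erase v).card) + 1 := by
          exact Nat.add_le_add_right (card_biUnion_le) 1
      _ ≤ (∑ e ∈ E.filter (fun e => e ⊆ S ∧ v ∈ e ∧ u ∈ e), (dcard - 2)) + 1 := by
          refine Nat.add_le_add_right (Finset.sum_le_sum ?_) 1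
          intro e hee
          rw [mem_filter] at hee
          obtain ⟨heE, _, hve, hue⟩ := hee
          have h1 : ((e.erase u).erase v).card = e.card - 1 - 1 := by
            rw [card_erase_of_mem (mem_erase.mpr ⟨(Ne.symm huv), hve⟩),
              card_erase_of_mem hue]
          rw [h1]
          have := hcard e heE
          omega
      _ ≤ dpair * (dcard - 2) + 1 := by
          rw [Finset.sum_const, smul_eq_mul]
          refine Nat.add_le_add_right (Nat.mul_le_mul_right _ ?_) 1
          refine le_trans (card_le_card ?_) (hpair v u (Ne.symm huv))
          intro e hee
          rw [mem_filter] at hee ⊢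
          exact ⟨hee.1, hee.2.2.1, hee.2.2.2⟩
  -- sum the losses: only nodes in nbr E S v lose anything
  have hnbrsub : nbr E S v ⊆ S' := by
    intro w hw
    simp only [nbr, mem_filter] at hw
    exact mem_erase.mpr ⟨hw.2.1, hw.1⟩
  have hsumL : ∑ u ∈ S', (L u).card ≤ (dpair * (dcard - 2) + 1) * (nbr E S v).card := by
    have heq : ∑ u ∈ nbr E S v, (L u).card = ∑ u ∈ S', (L u).card := by
      refine Finset.sum_subset hnbrsub ?_
      intro u hu hnu
      rw [hLempty u hu hnu, card_empty]
    rw [← heq]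
    calc ∑ u ∈ nbr E S v, (L u).card
        ≤ ∑ _u ∈ nbr E S v, (dpair * (dcard - 2) + 1) :=
          Finset.sum_le_sum (fun u hu => hLcard u (hnbrsub hu))
      _ = (dpair * (dcard - 2) + 1) * (nbr E S v).card := by
          rw [Finset.sum_const, smul_eq_mul, mul_comm]
  -- assemble
  have hmain : ∑ u ∈ S, (nbr E S u).card
      = (nbr E S v).card + ∑ u ∈ S', (nbr E S u).card :=
    (Finset.add_sum_erase S _ hv).symm
  rw [hmain]
  have h2 : ∑ u ∈ S', (nbr E S u).card
      = ∑ u ∈ S', (nbr E S' u).card + ∑ u ∈ S', (L u).card := by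
    rw [← Finset.sum_add_distrib]
    exact Finset.sum_congr rfl (fun u _ => hsplit u)
  rw [h2]
  have hexp : (dpair * (dcard - 2) + 2) * (nbr E S v).card
      = (dpair * (dcard - 2) + 1) * (nbr E S v).card + (nbr E S v).card := by ring
  rw [hexp]
  omega
end

section
/- Every node of an optimal volume-densest set has large degree: if S* maximizes volume-density ρ(S) = (Σ_{u∈S}|N_S(u)|)/|S|, then every v ∈ S* satisfies |N_{S*}(v)| ≥ ρ(S*)/(d_pair(d_card−2)+2). -/
open Finset

variable {α : Type*} [DecidableEq α]

/-- Volume-density of a node set `S`. -/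
noncomputable def density (E : Finset (Finset α)) (S : Finset α) : ℚ :=
  (∑ u ∈ S, ((nbr E S u).card : ℚ)) / S.card

lemma mem_nbr' {E : Finset (Finset α)} {S : Finset α} {v u : α} :
    u ∈ nbr E S v ↔ u ∈ S ∧ u ≠ v ∧ ∃ e ∈ E, e ⊆ S ∧ v ∈ e ∧ u ∈ e := by
  simp [nbr]

lemma deletion_ineq (E : Finset (Finset α)) (dcard dpair : ℕ)
    (hcard : ∀ e ∈ E, e.card ≤ dcard)
    (hpair : ∀ u w : α, u ≠ w → (E.filter (fun e => u ∈ e ∧ w ∈ e)).card ≤ dpair)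
    (S : Finset α) (v : α) (hv : v ∈ S) :
    ∑ u ∈ S, (nbr E S u).card ≤
      ∑ u ∈ S.erase v, (nbr E (S.erase v) u).card
        + (dpair * (dcard - 2) + 2) * (nbr E S v).card := by
  classical
  set T := S.erase v with hT
  have hTS : T ⊆ S := erase_subset _ _
  have hsub : ∀ u : α, nbr E T u ⊆ nbr E S u := by
    intro u w hw
    rcases mem_nbr'.1 hw with ⟨hwT, hwu, e, heE, heT, hue, hwe⟩
    exact mem_nbr'.2 ⟨hTS hwT, hwu, e, heE, heT.trans hTS, hue, hwe⟩
  have hsplit : ∀ u : α, (nbr E S u).card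
      = (nbr E S u \ nbr E T u).card + (nbr E T u).card := by
    intro u
    rw [card_sdiff_add_card_eq_card (hsub u)]
  set bad : α → Finset α := fun u =>
    (nbr E S v).filter (fun w => w ≠ u ∧ ∃ e ∈ E, e ⊆ S ∧ v ∈ e ∧ u ∈ e ∧ w ∈ e) with hbaddef
  have hdiff : ∀ u ∈ T, (nbr E S u \ nbr E T u) ⊆ insert v (bad u) := by
    intro u hu w hw
    rcases mem_sdiff.1 hw with ⟨hwS, hwnot⟩
    rcases mem_nbr'.1 hwS with ⟨hwSmem, hwu, e, heE, heS, hue, hwe⟩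
    by_cases hwv : w = v
    · exact mem_insert.2 (Or.inl hwv)
    · have hve : v ∈ e := by
        by_contra hve
        apply hwnot
        refine mem_nbr'.2 ⟨mem_erase.2 ⟨hwv, hwSmem⟩, hwu, e, heE, ?_, hue, hwe⟩
        intro x hx
        exact mem_erase.2 ⟨fun h => hve (h ▸ hx), heS hx⟩
      refine mem_insert.2 (Or.inr ?_)
      refine mem_filter.2 ⟨mem_nbr'.2 ⟨hwSmem, hwv, e, heE, heS, hve, hwe⟩,
        hwu, e, heE, heS, hve, hue, hwe⟩
  have hbadcard : ∀ u ∈ T, (bad u).card ≤ dpair * (dcard - 2) := by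
    intro u hu
    have huv : u ≠ v := (mem_erase.1 hu).1
    have hsubB : bad u ⊆ (E.filter (fun e => v ∈ e ∧ u ∈ e)).biUnion
        (fun e => (e.erase v).erase u) := by
      intro w hw
      rcases mem_filter.1 hw with ⟨hwN, hwu, e, heE, heS, hve, hue, hwe⟩
      have hwv : w ≠ v := (mem_nbr'.1 hwN).2.1
      exact mem_biUnion.2 ⟨e, mem_filter.2 ⟨heE, hve, hue⟩,
        mem_erase.2 ⟨hwu, mem_erase.2 ⟨hwv, hwe⟩⟩⟩
    calc (bad u).card ≤ ((E.filter (fun e => v ∈ e ∧ u ∈ e)).biUnion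
          (fun e => (e.erase v).erase u)).card := card_le_card hsubB
      _ ≤ ∑ e ∈ E.filter (fun e => v ∈ e ∧ u ∈ e), ((e.erase v).erase u).card :=
          card_biUnion_le
      _ ≤ (E.filter (fun e => v ∈ e ∧ u ∈ e)).card * (dcard - 2) := by
          apply Finset.sum_le_card_nsmul
          intro e he
          rcases mem_filter.1 he with ⟨heE, hve, hue⟩
          have h1 : (e.erase v).card = e.card - 1 := card_erase_of_mem hve
          have h2 : ((e.erase v).erase u).card = (e.erase v).card - 1 :=
            card_erase_of_mem (mem_erase.2 ⟨huv, hue⟩)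
          have h3 : e.card ≤ dcard := hcard e heE
          omega
      _ ≤ dpair * (dcard - 2) :=
          Nat.mul_le_mul_right _ (hpair v u (Ne.symm huv))
  have hzero : ∀ u ∈ T, u ∉ nbr E S v → (nbr E S u \ nbr E T u) = ∅ := by
    intro u hu hnu
    rw [eq_empty_iff_forall_notMem]
    intro w hw
    have huS : u ∈ S := hTS hu
    have huv : u ≠ v := (mem_erase.1 hu).1
    rcases mem_insert.1 (hdiff u hu hw) with hwv | hwb
    · -- w = v, so v ∈ nbr E S u, hence u ∈ nbr E S v
      rcases mem_sdiff.1 hw with ⟨hwS, _⟩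
      rcases mem_nbr'.1 hwS with ⟨_, _, e, heE, heS, hue, hwe⟩
      exact hnu (mem_nbr'.2 ⟨huS, huv, e, heE, heS, hwv ▸ hwe, hue⟩)
    · rcases mem_filter.1 hwb with ⟨_, _, e, heE, heS, hve, hue, _⟩
      exact hnu (mem_nbr'.2 ⟨huS, huv, e, heE, heS, hve, hue⟩)
  have hNsubT : nbr E S v ⊆ T := by
    intro u hu
    rcases mem_nbr'.1 hu with ⟨huS, huv, _⟩
    exact mem_erase.2 ⟨huv, huS⟩
  have hsum1 : ∑ u ∈ T, (nbr E S u \ nbr E T u).card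
      = ∑ u ∈ nbr E S v, (nbr E S u \ nbr E T u).card := by
    refine (Finset.sum_subset hNsubT (fun u hu hnu => ?_)).symm
    rw [hzero u hu hnu, card_empty]
  have hsum2 : ∑ u ∈ nbr E S v, (nbr E S u \ nbr E T u).card
      ≤ (nbr E S v).card * (dpair * (dcard - 2) + 1) := by
    apply Finset.sum_le_card_nsmul
    intro u hu
    have huT : u ∈ T := hNsubT hu
    calc (nbr E S u \ nbr E T u).card ≤ (insert v (bad u)).card :=
          card_le_card (hdiff u huT)
      _ ≤ (bad u).card + 1 := card_insert_le _ _
      _ ≤ dpair * (dcard - 2) + 1 := by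
          exact Nat.add_le_add_right (hbadcard u huT) 1
  have hsumS : ∑ u ∈ S, (nbr E S u).card
      = ∑ u ∈ T, (nbr E S u).card + (nbr E S v).card := by
    rw [hT, Finset.sum_erase_add S _ hv]
  have hsumT : ∑ u ∈ T, (nbr E S u).card
      = ∑ u ∈ T, (nbr E S u \ nbr E T u).card + ∑ u ∈ T, (nbr E T u).card := by
    rw [← Finset.sum_add_distrib]
    exact Finset.sum_congr rfl fun u _ => hsplit u
  have hD : ∑ u ∈ T, (nbr E S u \ nbr E T u).card
      ≤ (nbr E S v).card * (dpair * (dcard - 2) + 1) := hsum1 ▸ hsum2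
  have := hsumS
  rw [hsumT] at this
  calc ∑ u ∈ S, (nbr E S u).card
      = ∑ u ∈ T, (nbr E S u \ nbr E T u).card + ∑ u ∈ T, (nbr E T u).card
        + (nbr E S v).card := this
    _ ≤ (nbr E S v).card * (dpair * (dcard - 2) + 1) + ∑ u ∈ T, (nbr E T u).card
        + (nbr E S v).card := by
        exact Nat.add_le_add_right (Nat.add_le_add_right hD _) _
    _ = ∑ u ∈ T, (nbr E (S.erase v) u).card
        + (dpair * (dcard - 2) + 2) * (nbr E S v).card := by
        rw [hT]; ring

/-- Every node of an optimal volume-densest set has at least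
`ρ(S*) / (d_pair·(d_card − 2) + 2)` neighbors in it. -/
theorem optimal_min_degree (E : Finset (Finset α)) (dcard dpair : ℕ)
    (hcard : ∀ e ∈ E, e.card ≤ dcard)
    (hpair : ∀ u w : α, u ≠ w → (E.filter (fun e => u ∈ e ∧ w ∈ e)).card ≤ dpair)
    (Sstar : Finset α) (hopt : ∀ T : Finset α, density E T ≤ density E Sstar)
    (v : α) (hv : v ∈ Sstar) :
    density E Sstar ≤ ((dpair * (dcard - 2) + 2 : ℕ) : ℚ) * ((nbr E Sstar v).card : ℚ) := by
  classical
  set C : ℕ := dpair * (dcard - 2) + 2 with hC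
  set A : ℕ := ∑ u ∈ Sstar, (nbr E Sstar u).card with hA
  set B : ℕ := ∑ u ∈ Sstar.erase v, (nbr E (Sstar.erase v) u).card with hB
  set D : ℕ := (nbr E Sstar v).card with hD
  have hkey : A ≤ B + C * D := deletion_ineq E dcard dpair hcard hpair Sstar v hv
  have hn : 0 < Sstar.card := card_pos.2 ⟨v, hv⟩
  have hdensS : density E Sstar = (A : ℚ) / (Sstar.card : ℚ) := by
    rw [density, hA]; push_cast; ring
  by_cases h1 : Sstar.card = 1
  · -- Sstar = {v}
    have hSv : Sstar = {v} := by
      rcases card_eq_one.1 h1 with ⟨a, ha⟩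
      rw [ha] at hv ⊢
      simp_all
    have : density E Sstar = (D : ℚ) := by
      rw [hdensS, hA, hSv]
      simp [hD, hSv]
    rw [this]
    have h1C : (1 : ℚ) ≤ (C : ℚ) := by
      have : 1 ≤ C := by omega
      exact_mod_cast this
    nlinarith [Nat.cast_nonneg (α := ℚ) D]
  · have hn2 : 2 ≤ Sstar.card := by omega
    have hm : (Sstar.erase v).card = Sstar.card - 1 := card_erase_of_mem hv
    have hmQ : ((Sstar.erase v).card : ℚ) = (Sstar.card : ℚ) - 1 := by
      rw [hm]; push_cast [Nat.cast_sub hn]; ring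
    have hmpos : (0 : ℚ) < (Sstar.card : ℚ) - 1 := by
      have : (2 : ℚ) ≤ (Sstar.card : ℚ) := by exact_mod_cast hn2
      linarith
    have hnpos : (0 : ℚ) < (Sstar.card : ℚ) := by exact_mod_cast hn
    have hdensT : density E (Sstar.erase v) = (B : ℚ) / ((Sstar.card : ℚ) - 1) := by
      rw [density, hB, hmQ]; push_cast; ring
    have hopt' := hopt (Sstar.erase v)
    rw [hdensT, hdensS] at hopt'
    have hcross : (B : ℚ) * (Sstar.card : ℚ) ≤ (A : ℚ) * ((Sstar.card : ℚ) - 1) :=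
      (div_le_div_iff₀ hmpos hnpos).1 hopt'
    have hkeyQ : (A : ℚ) ≤ (B : ℚ) + (C : ℚ) * (D : ℚ) := by exact_mod_cast hkey
    rw [hdensS, div_le_iff₀ hnpos]
    nlinarith [Nat.cast_nonneg (α := ℚ) D, Nat.cast_nonneg (α := ℚ) C]
end
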